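/- Fake orchestrated compliance example: let f = ⟨a,ā⟩.⟨b,ε⟩.1, let the client be ρ = ā.b̄.1 and the server σ = a.c.d.1 (for pairwise distinct names a, b, c, d). Then f : ρ ⊣⊩ᵈˢ σ holds (f is ρ·σ strict and the only stuck configuration reachable from ρ∥_fσ has client 1), but f : ρ ⊣⊩ σ does not hold, because the maximal computation trace ⟨a,ā⟩⟨b,ε⟩ is not client-respectful (its left-restriction to b is finite and the final client-to-server count of b is 1 ≠ 0). -/
import Mathlib


/-! Core formalisation: session contracts, session orchestrators, orchestrated systems,
    buffers, (finite and infinite) sequences of orchestration actions, respectfulness,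
    and the compliance relations. Names are natural numbers. Recursion binders use
    de Bruijn indices (`var n`, with `mu` binding index 0); equi-recursive identification
    of `rec x.σ` with its unfolding is realised by unfolding rules in the LTSs. -/

abbrev Name := ℕ

/-- Actions of session contracts: an input `a` or an output `ā`. -/
inductive Act : Type where
  | inp : Name → Act
  | out : Name → Act
deriving DecidableEq

/-- Orchestration actions:
    `cIn a` = ⟨a,ε⟩, `cSync a` = ⟨a,ā⟩ (category ι_L);
    `sIn a` = ⟨ε,a⟩, `sSync a` = ⟨ā,a⟩ (category ι_R);
    `cOut a` = ⟨ā,ε⟩, `sOut a` = ⟨ε,ā⟩ (category o). -/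
inductive OAct : Type where
  | cIn   : Name → OAct
  | cSync : Name → OAct
  | sIn   : Name → OAct
  | sSync : Name → OAct
  | cOut  : Name → OAct
  | sOut  : Name → OAct
deriving DecidableEq

def OAct.catL : OAct → Prop
  | .cIn _ => True
  | .cSync _ => True
  | _ => False

def OAct.catR : OAct → Prop
  | .sIn _ => True
  | .sSync _ => True
  | _ => False

def OAct.catO : OAct → Prop
  | .cOut _ => True
  | .sOut _ => True
  | _ => False

/-- Raw session contracts: `one` = 1 (success), `ext l` = external choice a₁.σ₁+⋯+aₙ.σₙ,
    `int l` = internal choice ā₁.σ₁⊕⋯⊕āₙ.σₙ, de Bruijn variables and recursion. -/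
inductive SC : Type where
  | one : SC
  | ext : List (Name × SC) → SC
  | int : List (Name × SC) → SC
  | var : ℕ → SC
  | mu : SC → SC

namespace SC

/-- Substitution of the (closed) term `u` for the variable of de Bruijn index `k`. -/
def subst (u : SC) : SC → ℕ → SC
  | SC.one, _ => SC.one
  | SC.ext l, k => SC.ext (l.attach.map fun p => (p.1.1, subst u p.1.2 k))
  | SC.int l, k => SC.int (l.attach.map fun p => (p.1.1, subst u p.1.2 k))
  | SC.var x, k => if x = k then u else SC.var x
  | SC.mu b, k => SC.mu (subst u b (k + 1))
termination_by s _ => sizeOf s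
decreasing_by
  · obtain ⟨⟨a1, s1⟩, hp⟩ := p
    have := List.sizeOf_lt_of_mem hp
    simp_wf; simp at this; omega
  · obtain ⟨⟨a1, s1⟩, hp⟩ := p
    have := List.sizeOf_lt_of_mem hp
    simp_wf; simp at this; omega
  · simp_wf

/-- One-step unfolding of a recursive contract: `rec x.σ  ↦  σ[rec x.σ / x]`. -/
def unfold (b : SC) : SC := subst (SC.mu b) b 0

/-- All free de Bruijn indices are `< n`. -/
inductive ClosedAbove : SC → ℕ → Prop where
  | one : ∀ n, ClosedAbove .one n
  | ext : ∀ l n, (∀ p ∈ l, ClosedAbove p.2 n) → ClosedAbove (.ext l) n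
  | int : ∀ l n, (∀ p ∈ l, ClosedAbove p.2 n) → ClosedAbove (.int l) n
  | var : ∀ x n, x < n → ClosedAbove (.var x) n
  | mu : ∀ b n, ClosedAbove b (n + 1) → ClosedAbove (.mu b) n

/-- Structural well-formedness: choices are nonempty with pairwise distinct names,
    and recursion bodies are not variables (contractiveness). -/
inductive WF : SC → Prop where
  | one : WF .one
  | ext : ∀ l, l ≠ [] → (l.map Prod.fst).Nodup → (∀ p ∈ l, WF p.2) → WF (.ext l)
  | int : ∀ l, l ≠ [] → (l.map Prod.fst).Nodup → (∀ p ∈ l, WF p.2) → WF (.int l)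
  | var : ∀ x, WF (.var x)
  | mu : ∀ b, (∀ x, b ≠ .var x) → WF b → WF (.mu b)

/-- τ-transitions of session contracts (with equi-recursive unfolding). -/
inductive Tau : SC → SC → Prop where
  | int : ∀ l p, p ∈ l → Tau (SC.int l) (SC.int [p])
  | unfold : ∀ b σ', Tau b.unfold σ' → Tau (SC.mu b) σ'

/-- Labelled transitions of session contracts (with equi-recursive unfolding). -/
inductive Step : SC → Act → SC → Prop where
  | ext : ∀ l a σ, (a, σ) ∈ l → Step (SC.ext l) (Act.inp a) σ
  | out : ∀ a σ, Step (SC.int [(a, σ)]) (Act.out a) σ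
  | unfold : ∀ b α σ', Step b.unfold α σ' → Step (SC.mu b) α σ'

end SC

/-- `σ` is a session contract: a closed, well-formed raw session contract. -/
def IsContract (σ : SC) : Prop := σ.ClosedAbove 0 ∧ σ.WF

/-- Raw session orchestrators: `one` = 1, `choice l` = μ₁.f₁ ∨ ⋯ ∨ μₙ.fₙ,
    de Bruijn variables and recursion. -/
inductive Orch : Type where
  | one : Orch
  | choice : List (OAct × Orch) → Orch
  | var : ℕ → Orch
  | mu : Orch → Orch

namespace Orch

/-- Simultaneous substitution of the (closed) orchestrators `θ` for the free variables. -/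
def msubst : Orch → List Orch → Orch
  | .one, _ => .one
  | .choice l, θ => .choice (l.attach.map fun p => (p.1.1, msubst p.1.2 θ))
  | .var x, θ => θ.getD x (.var x)
  | .mu b, θ => .mu (msubst b (Orch.var 0 :: θ))
termination_by f _ => sizeOf f
decreasing_by
  · obtain ⟨⟨a1, s1⟩, hp⟩ := p
    have := List.sizeOf_lt_of_mem hp
    simp_wf; simp at this; omega
  · simp_wf

/-- One-step unfolding of a recursive orchestrator. -/
def unfold (b : Orch) : Orch := msubst b [Orch.mu b]

inductive ClosedAbove : Orch → ℕ → Prop where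
  | one : ∀ n, ClosedAbove .one n
  | choice : ∀ l n, (∀ p ∈ l, ClosedAbove p.2 n) → ClosedAbove (.choice l) n
  | var : ∀ x n, x < n → ClosedAbove (.var x) n
  | mu : ∀ b n, ClosedAbove b (n + 1) → ClosedAbove (.mu b) n

/-- Structural well-formedness of orchestrators: every choice is nonempty and either all
    its prefixes are of category ι_L, or all of category ι_R, or it is a single prefix of
    category o; recursion bodies are not variables. -/
inductive WF : Orch → Prop where
  | one : WF .one
  | choice : ∀ l, l ≠ [] →
      ((∀ p ∈ l, OAct.catL p.1) ∨ (∀ p ∈ l, OAct.catR p.1) ∨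
        (∃ μ g, OAct.catO μ ∧ l = [(μ, g)])) →
      (∀ p ∈ l, WF p.2) → WF (.choice l)
  | var : ∀ x, WF (.var x)
  | mu : ∀ b, (∀ x, b ≠ .var x) → WF b → WF (.mu b)

/-- LTS of orchestrators (with equi-recursive unfolding). -/
inductive Step : Orch → OAct → Orch → Prop where
  | pre : ∀ l μ g, (μ, g) ∈ l → Step (Orch.choice l) μ g
  | unfold : ∀ b μ g, Step b.unfold μ g → Step (Orch.mu b) μ g

/-- Finite traces of an orchestrator. -/
inductive Trace : Orch → List OAct → Orch → Prop where
  | nil : ∀ f, Trace f [] f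
  | cons : ∀ f μ g ms h, Step f μ g → Trace g ms h → Trace f (μ :: ms) h

def NoStep (f : Orch) : Prop := ¬ ∃ μ g, Step f μ g

end Orch

/-- `f` is a session orchestrator: closed and well-formed. -/
def IsOrch (f : Orch) : Prop := f.ClosedAbove 0 ∧ f.WF

/-! ### Orchestrated systems ρ ∥_f σ -/

abbrev Conf := SC × Orch × SC

namespace Sys

/-- Internal (τ) steps of an orchestrated system. -/
inductive Tau : Conf → Conf → Prop where
  | client : ∀ ρ ρ' f σ, SC.Tau ρ ρ' → Tau (ρ, f, σ) (ρ', f, σ)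
  | server : ∀ ρ f σ σ', SC.Tau σ σ' → Tau (ρ, f, σ) (ρ, f, σ')

/-- Steps of an orchestrated system, labelled by the orchestration action performed. -/
inductive Step : Conf → OAct → Conf → Prop where
  | syncCS : ∀ ρ ρ' f f' σ σ' a, SC.Step ρ (Act.out a) ρ' → Orch.Step f (OAct.cSync a) f' →
      SC.Step σ (Act.inp a) σ' → Step (ρ, f, σ) (OAct.cSync a) (ρ', f', σ')
  | syncSC : ∀ ρ ρ' f f' σ σ' a, SC.Step ρ (Act.inp a) ρ' → Orch.Step f (OAct.sSync a) f' →
      SC.Step σ (Act.out a) σ' → Step (ρ, f, σ) (OAct.sSync a) (ρ', f', σ')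
  | cIn : ∀ ρ ρ' f f' σ a, SC.Step ρ (Act.out a) ρ' → Orch.Step f (OAct.cIn a) f' →
      Step (ρ, f, σ) (OAct.cIn a) (ρ', f', σ)
  | cOut : ∀ ρ ρ' f f' σ a, SC.Step ρ (Act.inp a) ρ' → Orch.Step f (OAct.cOut a) f' →
      Step (ρ, f, σ) (OAct.cOut a) (ρ', f', σ)
  | sIn : ∀ ρ f f' σ σ' a, Orch.Step f (OAct.sIn a) f' → SC.Step σ (Act.out a) σ' →
      Step (ρ, f, σ) (OAct.sIn a) (ρ, f', σ')
  | sOut : ∀ ρ f f' σ σ' a, Orch.Step f (OAct.sOut a) f' → SC.Step σ (Act.inp a) σ' →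
      Step (ρ, f, σ) (OAct.sOut a) (ρ, f', σ')

/-- Any number of τ-steps. -/
def TauRT : Conf → Conf → Prop := Relation.ReflTransGen Tau

/-- Weak labelled step `⟹^μ`. -/
def WStep (c : Conf) (μ : OAct) (c' : Conf) : Prop :=
  ∃ c₁ c₂, TauRT c c₁ ∧ Step c₁ μ c₂ ∧ TauRT c₂ c'

/-- `Exec c ms c'`: the system performs the finite sequence `ms` of orchestration
    actions (interspersed with τ-steps), i.e. `c ⟹^{ms} c'`. -/
inductive Exec : Conf → List OAct → Conf → Prop where
  | nil : ∀ c c', TauRT c c' → Exec c [] c'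
  | cons : ∀ c c₁ c₂ μ ms c', TauRT c c₁ → Step c₁ μ c₂ → Exec c₂ ms c' →
      Exec c (μ :: ms) c'

/-- Infinite executions along the infinite sequence `s` of orchestration actions. -/
def InfExec (c : Conf) (s : ℕ → OAct) : Prop :=
  ∃ cs : ℕ → Conf, cs 0 = c ∧ ∀ n, WStep (cs n) (s n) (cs (n + 1))

/-- `c ↛`: no τ-step and no labelled step is possible. -/
def Stuck (c : Conf) : Prop := (¬ ∃ c', Tau c c') ∧ (¬ ∃ μ c', Step c μ c')

end Sys

/-- `f` is ρ·σ strict: every finite trace of `f` can be performed by the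
    orchestrated system ρ ∥_f σ. -/
def Strict (ρ : SC) (f : Orch) (σ : SC) : Prop :=
  ∀ ms g, Orch.Trace f ms g → ∃ c', Sys.Exec (ρ, f, σ) ms c'

/-- Disrespectful strict compliance `f : ρ ⊣⊩ᵈˢ σ`. -/
def DSCompliant (f : Orch) (ρ σ : SC) : Prop :=
  Strict ρ f σ ∧
  ∀ ms ρ' f' σ', Sys.Exec (ρ, f, σ) ms (ρ', f', σ') → Sys.Stuck (ρ', f', σ') → ρ' = SC.one

/-! ### Buffers and respectfulness -/

/-- The contribution of one orchestration action to the two buffer counters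
    (client-to-server, server-to-client) for the name `a`. -/
def OAct.delta : OAct → Name → ℤ × ℤ
  | .cIn b, a => (if b = a then 1 else 0, 0)
  | .cOut b, a => (if b = a then -1 else 0, 0)
  | .sIn b, a => (0, if b = a then 1 else 0)
  | .sOut b, a => (0, if b = a then -1 else 0)
  | _, _ => (0, 0)

/-- The state of the (initially empty) buffer for name `a` after the finite sequence
    `ms`: `(client-to-server count, server-to-client count)`. -/
def bufCount (ms : List OAct) (a : Name) : ℤ × ℤ :=
  ((ms.map fun μ => (μ.delta a).1).sum, (ms.map fun μ => (μ.delta a).2).sum)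

/-- The actions kept by the left-restriction `μ⃗↾ₐ`: exactly ⟨ε,ā⟩ and ⟨a,ε⟩. -/
def OAct.keepA (a : Name) (μ : OAct) : Prop := μ = OAct.sOut a ∨ μ = OAct.cIn a

def OAct.isSIn : OAct → Prop
  | .sIn _ => True
  | _ => False

/-- A finite or infinite sequence of orchestration actions. -/
inductive OSeq : Type where
  | fin : List OAct → OSeq
  | inf : (ℕ → OAct) → OSeq

namespace OSeq

/-- The finite prefixes of a sequence. -/
def prefixes : OSeq → Set (List OAct)
  | .fin l => {t | t <+: l}
  | .inf s => {t | ∃ n, t = (List.range n).map s}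

/-- Soundness: along every prefix, both buffer counts of every name stay ≥ 0. -/
def Sound (v : OSeq) : Prop :=
  ∀ t ∈ v.prefixes, ∀ a, 0 ≤ (bufCount t a).1 ∧ 0 ≤ (bufCount t a).2

/-- The left-restriction `μ⃗↾ₐ` is finite. -/
def restrFinite : OSeq → Name → Prop
  | .fin _, _ => True
  | .inf s, a => ∃ N, ∀ n, N ≤ n → ¬ OAct.keepA a (s n)

/-- "After all of μ⃗ the client-to-server count of `a` is 0." -/
def csFinalZero : OSeq → Name → Prop
  | .fin l, a => (bufCount l a).1 = 0
  | .inf s, a => ∃ N, ∀ n, N ≤ n → (bufCount ((List.range n).map s) a).1 = 0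

/-- The left-restriction `μ⃗↾ₐ` is definitely-⟨a,ε⟩: from some point on, every element
    of μ⃗ kept by the restriction is ⟨a,ε⟩. -/
def defCIn : OSeq → Name → Prop
  | .fin _, _ => True
  | .inf s, a => ∃ N, ∀ n, N ≤ n → OAct.keepA a (s n) → s n = OAct.cIn a

/-- Client-respectfulness of a sequence. -/
def ClientRespectful (v : OSeq) : Prop :=
  ∀ a, (v.restrFinite a ∧ v.csFinalZero a) ∨ (¬ v.restrFinite a ∧ ¬ v.defCIn a)

/-- Non-definitely server-inputted sequences. -/
def NonDefSI : OSeq → Prop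
  | .fin _ => True
  | .inf s => ¬ ∃ N, ∀ n, N ≤ n → OAct.isSIn (s n)

/-- Respectful sequences. -/
def Respectful (v : OSeq) : Prop := v.Sound ∧ v.ClientRespectful ∧ v.NonDefSI

end OSeq

/-- Maximal traces of an orchestrator: finite traces ending in an orchestrator without
    transitions, and infinite traces. -/
def Orch.MaxTrace (f : Orch) : OSeq → Prop
  | .fin ms => ∃ g, Orch.Trace f ms g ∧ g.NoStep
  | .inf s => ∃ fs : ℕ → Orch, fs 0 = f ∧ ∀ n, Orch.Step (fs n) (s n) (fs (n + 1))

/-- A respectful orchestrator: all its maximal traces are respectful. -/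
def Orch.Respectful (f : Orch) : Prop := ∀ v, f.MaxTrace v → v.Respectful

/-- Orchestrated session compliance `f : ρ ⊣⊩ σ`. -/
def Compliant (f : Orch) (ρ σ : SC) : Prop :=
  (∀ ms ρ' f' σ', Sys.Exec (ρ, f, σ) ms (ρ', f', σ') → Sys.Stuck (ρ', f', σ') →
      ρ' = SC.one ∧ OSeq.Respectful (.fin ms)) ∧
  (∀ s : ℕ → OAct, Sys.InfExec (ρ, f, σ) s → OSeq.Respectful (.inf s))

/-- `ρ ⊣⊩ σ`: some session orchestrator makes `ρ` compliant with `σ`. -/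
def Comply (ρ σ : SC) : Prop := ∃ f, IsOrch f ∧ Compliant f ρ σ

/-- `ρ ⊣⊩ᵈˢ σ`. -/
def DSComply (ρ σ : SC) : Prop := ∃ f, IsOrch f ∧ DSCompliant f ρ σ
/-! ### Auxiliary inversion lemmas for the example -/

section Aux

private lemma sc_tau_int {p : Name × SC} {σ' : SC} (h : SC.Tau (SC.int [p]) σ') :
    σ' = SC.int [p] := by
  cases h with
  | int l q hq => simp at hq; subst hq; rfl

private lemma sc_step_int {a : Name} {X σ' : SC} {α : Act}
    (h : SC.Step (SC.int [(a, X)]) α σ') : α = Act.out a ∧ σ' = X := by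
  cases h with
  | out => exact ⟨rfl, rfl⟩

private lemma sc_step_ext {l : List (Name × SC)} {σ' : SC} {α : Act}
    (h : SC.Step (SC.ext l) α σ') : ∃ a, α = Act.inp a ∧ (a, σ') ∈ l := by
  cases h with
  | ext _ a σ hm => exact ⟨a, rfl, hm⟩

private lemma orch_step_single {μ0 : OAct} {g0 : Orch} {μ : OAct} {g : Orch}
    (h : Orch.Step (Orch.choice [(μ0, g0)]) μ g) : μ = μ0 ∧ g = g0 := by
  cases h with
  | pre _ _ _ hm => simpa using hm

private lemma orch_step_one {μ : OAct} {g : Orch} (h : Orch.Step Orch.one μ g) : False := by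
  cases h

private lemma sys_tau_eq {ρ : SC} {f : Orch} {σ : SC} {c' : Conf}
    (hρ : ρ = SC.one ∨ ∃ p, ρ = SC.int [p]) (hσ : ∃ l, σ = SC.ext l)
    (h : Sys.Tau (ρ, f, σ) c') : c' = (ρ, f, σ) := by
  cases h with
  | client _ ρ' _ _ ht =>
      rcases hρ with h1 | ⟨p, h1⟩ <;> subst h1
      · cases ht
      · rw [sc_tau_int ht]
  | server _ _ _ σ' ht =>
      rcases hσ with ⟨l, h1⟩; subst h1; cases ht

private lemma sys_taurt_eq {ρ : SC} {f : Orch} {σ : SC} {c' : Conf}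
    (hρ : ρ = SC.one ∨ ∃ p, ρ = SC.int [p]) (hσ : ∃ l, σ = SC.ext l)
    (h : Sys.TauRT (ρ, f, σ) c') : c' = (ρ, f, σ) := by
  induction h with
  | refl => rfl
  | tail _ ht ih => subst ih; exact sys_tau_eq hρ hσ ht

private theorem fake_aux (a b c d : Name) :
    DSCompliant (Orch.choice [(OAct.cSync a, Orch.choice [(OAct.cIn b, Orch.one)])])
        (SC.int [(a, SC.int [(b, SC.one)])])
        (SC.ext [(a, SC.ext [(c, SC.ext [(d, SC.one)])])]) ∧
      ¬ Compliant (Orch.choice [(OAct.cSync a, Orch.choice [(OAct.cIn b, Orch.one)])])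
        (SC.int [(a, SC.int [(b, SC.one)])])
        (SC.ext [(a, SC.ext [(c, SC.ext [(d, SC.one)])])]) ∧
      ¬ OSeq.ClientRespectful (OSeq.fin [OAct.cSync a, OAct.cIn b]) ∧
      (bufCount [OAct.cSync a, OAct.cIn b] b).1 = 1 := by
  -- abbreviations
  set σ1 : SC := SC.ext [(c, SC.ext [(d, SC.one)])] with hσ1def
  set ρ1 : SC := SC.int [(b, SC.one)] with hρ1def
  set f1 : Orch := Orch.choice [(OAct.cIn b, Orch.one)] with hf1def
  set ρ0 : SC := SC.int [(a, ρ1)] with hρ0def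
  set f0 : Orch := Orch.choice [(OAct.cSync a, f1)] with hf0def
  set σ0 : SC := SC.ext [(a, σ1)] with hσ0def
  -- step characterisations
  have step_c0 : ∀ μ c', Sys.Step (ρ0, f0, σ0) μ c' →
      μ = OAct.cSync a ∧ c' = (ρ1, f1, σ1) := by
    intro μ c' h
    cases h with
    | syncCS _ ρ' _ f' _ σ' a' hR hF hS =>
        obtain ⟨he, rfl⟩ := orch_step_single hF
        simp only [OAct.cSync.injEq] at he; subst he
        obtain ⟨-, rfl⟩ := sc_step_int hR
        obtain ⟨a2, hα2, hm⟩ := sc_step_ext hS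
        simp only [List.mem_singleton, Prod.mk.injEq] at hm
        obtain ⟨rfl, rfl⟩ := hm
        exact ⟨rfl, rfl⟩
    | syncSC _ _ _ _ _ _ a' hR hF hS =>
        have := (orch_step_single hF).1; simp at this
    | cIn _ _ _ _ _ a' hR hF =>
        have := (orch_step_single hF).1; simp at this
    | cOut _ _ _ _ _ a' hR hF =>
        have := (orch_step_single hF).1; simp at this
    | sIn _ _ _ _ _ a' hF hS =>
        have := (orch_step_single hF).1; simp at this
    | sOut _ _ _ _ _ a' hF hS =>
        have := (orch_step_single hF).1; simp at this
  have step_c1 : ∀ μ c', Sys.Step (ρ1, f1, σ1) μ c' →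
      μ = OAct.cIn b ∧ c' = (SC.one, Orch.one, σ1) := by
    intro μ c' h
    cases h with
    | cIn _ ρ' _ f' _ a' hR hF =>
        obtain ⟨he, rfl⟩ := orch_step_single hF
        simp only [OAct.cIn.injEq] at he; subst he
        obtain ⟨-, rfl⟩ := sc_step_int hR
        exact ⟨rfl, rfl⟩
    | syncCS _ _ _ _ _ _ a' hR hF hS =>
        have := (orch_step_single hF).1; simp at this
    | syncSC _ _ _ _ _ _ a' hR hF hS =>
        have := (orch_step_single hF).1; simp at this
    | cOut _ _ _ _ _ a' hR hF =>
        have := (orch_step_single hF).1; simp at this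
    | sIn _ _ _ _ _ a' hF hS =>
        have := (orch_step_single hF).1; simp at this
    | sOut _ _ _ _ _ a' hF hS =>
        have := (orch_step_single hF).1; simp at this
  have step_c2 : ∀ μ c', ¬ Sys.Step (SC.one, Orch.one, σ1) μ c' := by
    intro μ c' h
    cases h with
    | syncCS _ _ _ _ _ _ a' hR hF hS => exact orch_step_one hF
    | syncSC _ _ _ _ _ _ a' hR hF hS => exact orch_step_one hF
    | cIn _ _ _ _ _ a' hR hF => exact orch_step_one hF
    | cOut _ _ _ _ _ a' hR hF => exact orch_step_one hF
    | sIn _ _ _ _ _ a' hF hS => exact orch_step_one hF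
    | sOut _ _ _ _ _ a' hF hS => exact orch_step_one hF
  -- τ self-loops / stuckness
  have tau_c0 : Sys.Tau (ρ0, f0, σ0) (ρ0, f0, σ0) :=
    Sys.Tau.client _ _ _ _ (SC.Tau.int [(a, ρ1)] (a, ρ1) (by simp))
  have tau_c1 : Sys.Tau (ρ1, f1, σ1) (ρ1, f1, σ1) :=
    Sys.Tau.client _ _ _ _ (SC.Tau.int [(b, SC.one)] (b, SC.one) (by simp))
  have stuck_c2 : Sys.Stuck (SC.one, Orch.one, σ1) := by
    constructor
    · rintro ⟨c', h⟩
      cases h with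
      | client _ _ _ _ ht => cases ht
      | server _ _ _ _ ht => rw [hσ1def] at ht; cases ht
    · rintro ⟨μ, c', h⟩
      exact step_c2 μ c' h
  -- execution characterisations
  have hρ0ok : ρ0 = SC.one ∨ ∃ p, ρ0 = SC.int [p] := Or.inr ⟨_, hρ0def⟩
  have hρ1ok : ρ1 = SC.one ∨ ∃ p, ρ1 = SC.int [p] := Or.inr ⟨_, hρ1def⟩
  have hσ0ok : ∃ l, σ0 = SC.ext l := ⟨_, hσ0def⟩
  have hσ1ok : ∃ l, σ1 = SC.ext l := ⟨_, hσ1def⟩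
  have exec_c2 : ∀ ms c', Sys.Exec (SC.one, Orch.one, σ1) ms c' →
      ms = [] ∧ c' = (SC.one, Orch.one, σ1) := by
    intro ms c' h
    cases h with
    | nil _ _ ht => exact ⟨rfl, sys_taurt_eq (Or.inl rfl) hσ1ok ht⟩
    | cons _ c₁ c₂ μ ms' _ ht hs he =>
        have h1 := sys_taurt_eq (Or.inl rfl) hσ1ok ht
        subst h1
        exact (step_c2 μ c₂ hs).elim
  have exec_c1 : ∀ ms c', Sys.Exec (ρ1, f1, σ1) ms c' →
      (ms = [] ∧ c' = (ρ1, f1, σ1)) ∨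
      (ms = [OAct.cIn b] ∧ c' = (SC.one, Orch.one, σ1)) := by
    intro ms c' h
    cases h with
    | nil _ _ ht => exact Or.inl ⟨rfl, sys_taurt_eq hρ1ok hσ1ok ht⟩
    | cons _ c₁ c₂ μ ms' _ ht hs he =>
        have h1 := sys_taurt_eq hρ1ok hσ1ok ht
        subst h1
        obtain ⟨rfl, rfl⟩ := step_c1 μ c₂ hs
        obtain ⟨rfl, rfl⟩ := exec_c2 ms' c' he
        exact Or.inr ⟨rfl, rfl⟩
  have exec_c0 : ∀ ms c', Sys.Exec (ρ0, f0, σ0) ms c' →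
      (ms = [] ∧ c' = (ρ0, f0, σ0)) ∨
      (ms = [OAct.cSync a] ∧ c' = (ρ1, f1, σ1)) ∨
      (ms = [OAct.cSync a, OAct.cIn b] ∧ c' = (SC.one, Orch.one, σ1)) := by
    intro ms c' h
    cases h with
    | nil _ _ ht => exact Or.inl ⟨rfl, sys_taurt_eq hρ0ok hσ0ok ht⟩
    | cons _ c₁ c₂ μ ms' _ ht hs he =>
        have h1 := sys_taurt_eq hρ0ok hσ0ok ht
        subst h1
        obtain ⟨rfl, rfl⟩ := step_c0 μ c₂ hs
        rcases exec_c1 ms' c' he with ⟨rfl, rfl⟩ | ⟨rfl, rfl⟩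
        · exact Or.inr (Or.inl ⟨rfl, rfl⟩)
        · exact Or.inr (Or.inr ⟨rfl, rfl⟩)
  -- trace characterisations for the orchestrator
  have trace_one : ∀ ms (g : Orch), Orch.Trace Orch.one ms g → ms = [] := by
    intro ms g h
    cases h with
    | nil => rfl
    | cons _ _ _ _ _ hs => exact (orch_step_one hs).elim
  have trace_f1 : ∀ ms (g : Orch), Orch.Trace f1 ms g →
      ms = [] ∨ ms = [OAct.cIn b] := by
    intro ms g h
    cases h with
    | nil => exact Or.inl rfl
    | cons _ μ g' _ _ hs ht =>
        obtain ⟨rfl, rfl⟩ := orch_step_single hs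
        exact Or.inr (by rw [trace_one _ _ ht])
  have trace_f0 : ∀ ms (g : Orch), Orch.Trace f0 ms g →
      ms = [] ∨ ms = [OAct.cSync a] ∨ ms = [OAct.cSync a, OAct.cIn b] := by
    intro ms g h
    cases h with
    | nil => exact Or.inl rfl
    | cons _ μ g' _ _ hs ht =>
        obtain ⟨rfl, rfl⟩ := orch_step_single hs
        rcases trace_f1 _ _ ht with rfl | rfl
        · exact Or.inr (Or.inl rfl)
        · exact Or.inr (Or.inr rfl)
  -- concrete executions
  have st1 : Sys.Step (ρ0, f0, σ0) (OAct.cSync a) (ρ1, f1, σ1) :=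
    Sys.Step.syncCS _ _ _ _ _ _ a (SC.Step.out a ρ1)
      (Orch.Step.pre _ _ _ (by simp)) (SC.Step.ext _ a σ1 (by simp))
  have st2 : Sys.Step (ρ1, f1, σ1) (OAct.cIn b) (SC.one, Orch.one, σ1) :=
    Sys.Step.cIn _ _ _ _ _ b (SC.Step.out b SC.one)
      (Orch.Step.pre _ _ _ (by simp))
  have e0 : Sys.Exec (ρ0, f0, σ0) [] (ρ0, f0, σ0) :=
    Sys.Exec.nil _ _ Relation.ReflTransGen.refl
  have e1 : Sys.Exec (ρ0, f0, σ0) [OAct.cSync a] (ρ1, f1, σ1) :=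
    Sys.Exec.cons _ _ _ _ _ _ Relation.ReflTransGen.refl st1
      (Sys.Exec.nil _ _ Relation.ReflTransGen.refl)
  have e2 : Sys.Exec (ρ0, f0, σ0) [OAct.cSync a, OAct.cIn b] (SC.one, Orch.one, σ1) :=
    Sys.Exec.cons _ _ _ _ _ _ Relation.ReflTransGen.refl st1
      (Sys.Exec.cons _ _ _ _ _ _ Relation.ReflTransGen.refl st2
        (Sys.Exec.nil _ _ Relation.ReflTransGen.refl))
  -- the trace is not client-respectful
  have part3 : ¬ OSeq.ClientRespectful (OSeq.fin [OAct.cSync a, OAct.cIn b]) := by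
    intro h
    rcases h b with ⟨-, h2⟩ | ⟨h1, -⟩
    · simp [OSeq.csFinalZero, bufCount, OAct.delta] at h2
    · exact h1 trivial
  refine ⟨⟨?_, ?_⟩, ?_, part3, ?_⟩
  · -- strictness
    intro ms g htr
    rcases trace_f0 ms g htr with rfl | rfl | rfl
    · exact ⟨_, e0⟩
    · exact ⟨_, e1⟩
    · exact ⟨_, e2⟩
  · -- stuck implies client success
    intro ms ρ' f' σ' hexec hstuck
    rcases exec_c0 ms _ hexec with ⟨-, hc⟩ | ⟨-, hc⟩ | ⟨-, hc⟩ <;>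
      simp only [Prod.mk.injEq] at hc
    · obtain ⟨rfl, rfl, rfl⟩ := hc
      exact (hstuck.1 ⟨_, tau_c0⟩).elim
    · obtain ⟨rfl, rfl, rfl⟩ := hc
      exact (hstuck.1 ⟨_, tau_c1⟩).elim
    · exact hc.1
  · -- not compliant
    intro h
    exact part3 ((h.1 _ _ _ _ e2 stuck_c2).2).2.1
  · -- buffer count
    simp [bufCount, OAct.delta]

/-- Fake orchestrated compliance example: for f = ⟨a,ā⟩.⟨b,ε⟩.1, client
ρ = ā.b̄.1 and server σ = a.c.d.1 (a,b,c,d pairwise distinct), f : ρ ⊣⊩ᵈˢ σ holds but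
f : ρ ⊣⊩ σ does not, the maximal computation trace ⟨a,ā⟩⟨b,ε⟩ not being client-respectful
(its final client-to-server count of b is 1 ≠ 0). -/
theorem fake_compliance_example :
    ∀ a b c d : Name, a ≠ b → a ≠ c → a ≠ d → b ≠ c → b ≠ d → c ≠ d →
      let f : Orch := .choice [(OAct.cSync a, .choice [(OAct.cIn b, .one)])]
      let ρ : SC := .int [(a, .int [(b, .one)])]
      let σ : SC := .ext [(a, .ext [(c, .ext [(d, .one)])])]
      DSCompliant f ρ σ ∧
      ¬ Compliant f ρ σ ∧
      ¬ OSeq.ClientRespectful (OSeq.fin [OAct.cSync a, OAct.cIn b]) ∧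
      (bufCount [OAct.cSync a, OAct.cIn b] b).1 = 1 := by
  exact fun a b c d _ _ _ _ _ _ => fake_aux a b c d
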